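/- Let X be a real 2n-dimensional manifold and let Ω be a smooth complex n-form on X which at each point x is an SL_n(ℂ)-structure on T_xX, i.e., dim_ℂ Ker Ω(x) = n and Ker Ω(x) ∩ conj(Ker Ω(x)) = {0}, where Ker Ω(x) = {v ∈ T_xX ⊗ ℂ : i_v Ω(x) = 0}. Let I_Ω be the almost complex structure on X defined by I_Ω v = −√−1 v for v ∈ Ker Ω and I_Ω v = √−1 v for v ∈ conj(Ker Ω). If dΩ = 0, then the almost complex structure I_Ω is integrable. -/

import Mathlib

/-!
Goto, Lemma 4-1-2.  We model the Cartan calculus of a real `2n`-dimensional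
manifold `X` algebraically: `R` is the ring of smooth complex-valued
functions, `L` the `R`-module of smooth complexified vector fields
`Γ(TX ⊗ ℂ)` with Lie bracket `br`, action `ev` on functions and complex
conjugation `conj`; a raw `p`-form is a map `(Fin p → L) → R`, and a complex
differential `p`-form is an alternating `R`-multilinear raw form.

An `SL_n(ℂ)`-structure is a complex `n`-form `Ω` whose pointwise kernel
`Ker Ω = {v : i_vΩ = 0}` has complex dimension `n` and satisfies
`Ker Ω ∩ conj(Ker Ω) = {0}`; it determines the almost complex structure `I_Ω`
with `T^{0,1} = Ker Ω` and `T^{1,0} = conj(Ker Ω)`.  By the Newlander–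
Nirenberg theorem, `I_Ω` is integrable if and only if `T^{0,1} = Ker Ω` is
involutive, i.e. closed under the Lie bracket; the lemma asserts that this
holds whenever `dΩ = 0`. -/

/-- raw `p`-forms with values in `R`. -/
abbrev RawForm (R L : Type*) (p : ℕ) := (Fin p → L) → R

variable {R L : Type*} [CommRing R] [AddCommGroup L] [Module R L]

/-- the `p`-tuple obtained from a `(p+1)`-tuple `u` by deleting the entries
`i` and `j` and prepending `w`. -/
def insertTwo {p : ℕ} (u : Fin (p + 1) → L) (w : L) (i j : Fin (p + 1)) :
    Fin p → L :=
  fun k =>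
    if k.1 = 0 then w
    else if k.1 - 1 < i.1 then u ⟨k.1 - 1, by have := k.2; omega⟩
    else if k.1 < j.1 then u ⟨k.1, by have := k.2; omega⟩
    else u ⟨k.1 + 1, by have := k.2; omega⟩

/-- the exterior derivative (Koszul formula), for the action `ev` of vector
fields on functions and the Lie bracket `br` of vector fields. -/
def exd (ev : L → R → R) (br : L → L → L) {p : ℕ} (η : RawForm R L p) :
    RawForm R L (p + 1) :=
  fun u =>
    (∑ i : Fin (p + 1), (-1 : R) ^ (i : ℕ) * ev (u i) (η (u ∘ i.succAbove))) +
      ∑ i : Fin (p + 1), ∑ j : Fin (p + 1),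
        if i < j then
          (-1 : R) ^ ((i : ℕ) + (j : ℕ)) * η (insertTwo u (br (u i) (u j)) i j)
        else 0

/-- `Ker Ω = {v ∈ Γ(TX ⊗ ℂ) : i_vΩ = 0}`. -/
def kerForm {m : ℕ} (Ω : RawForm R L (m + 1)) : Set L :=
  {v | ∀ w : Fin m → L, Ω (Fin.cons v w) = 0}

/-!
Evaluate `dΩ` on `(v, w, w')` with `v, w ∈ Ker Ω` by the Koszul formula. As `Ω` is alternating,
it vanishes as soon as one of its arguments lies in `Ker Ω`; every term of the formula keeps `v`
or `w` among the arguments of `Ω`, except the bracket term `-Ω([v, w], w')`. So `dΩ = 0` forces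
`i_{[v, w]}Ω = 0`.
-/

def RawForm.toAlternatingMap {p : ℕ} (Ω : RawForm R L p)
    (hlin : ∀ (u : Fin p → L) (i : Fin p) (c : R) (x y : L),
      Ω (Function.update u i (c • x + y)) =
        c * Ω (Function.update u i x) + Ω (Function.update u i y))
    (halt : ∀ (u : Fin p → L) (i j : Fin p), i ≠ j → u i = u j → Ω u = 0) :
    L [⋀^Fin p]→ₗ[R] R where
  toMultilinearMap := MultilinearMap.mk' Ω
    (fun u i x y => by simpa using hlin u i 1 x y)
    (fun u i c x => by
      have h0 := hlin u i 1 0 0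
      simp only [one_smul, add_zero, one_mul, left_eq_add] at h0
      simpa [h0] using hlin u i c x 0)
  map_eq_zero_of_eq' u i j hu hij := halt u i j hij hu

lemma AlternatingMap.apply_eq_zero_of_mem_kerForm {m : ℕ} (Ω : L [⋀^Fin (m + 1)]→ₗ[R] R)
    {v : L} (hv : v ∈ kerForm ⇑Ω) {u : Fin (m + 1) → L} {i : Fin (m + 1)} (hu : u i = v) :
    Ω u = 0 := by
  have slot_zero : ∀ q : Fin (m + 1) → L, q 0 = v → Ω q = 0 := fun q hq => by
    rw [← Fin.cons_self_tail q, hq]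
    exact hv _
  rcases eq_or_ne i 0 with rfl | hi
  · exact slot_zero u hu
  · rw [← neg_eq_zero, ← Ω.map_swap u hi.symm]
    exact slot_zero _ (by simpa using hu)

section insertTwo

variable {α : Type*} {p : ℕ} (u : Fin (p + 1) → α) (w : α) {i j : Fin (p + 1)} {k : Fin p}

lemma insertTwo_of_ne_zero (hk : k.1 = 1) (hi : i ≠ 0) : insertTwo u w i j k = u 0 := by
  have : 0 < i.1 := Fin.pos_of_ne_zero hi
  rw [insertTwo, if_neg (by omega), if_pos (by omega)]
  congr 1; ext; simp [hk]

lemma insertTwo_zero_of_one_lt (hk : k.1 = 1) (hj : 1 < j.1) :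
    insertTwo u w 0 j k = u 1 := by
  have := j.2
  rw [insertTwo, if_neg (by omega), if_neg (by simp), if_pos (by omega)]
  congr 1; ext; simp [hk, Nat.mod_eq_of_lt (show 1 < p + 1 by omega)]

end insertTwo

lemma insertTwo_zero_one {α : Type*} {m : ℕ} (u : Fin (m + 2) → α) (w : α) :
    insertTwo u w 0 1 = Fin.cons w (Fin.tail (Fin.tail u)) := by
  funext k
  cases k using Fin.cases <;> rfl

lemma exd_apply_of_mem_kerForm {m : ℕ} (ev : L → R → R) (br : L → L → L)
    (hev : ∀ x, ev x 0 = 0) (Ω : L [⋀^Fin (m + 1)]→ₗ[R] R) {u : Fin (m + 2) → L}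
    (hu₀ : u 0 ∈ kerForm ⇑Ω) (hu₁ : u 1 ∈ kerForm ⇑Ω) :
    exd ev br (⇑Ω) u = -Ω (Fin.cons (br (u 0) (u 1)) (Fin.tail (Fin.tail u))) := by
  have hdrop (i : Fin (m + 2)) : Ω (u ∘ i.succAbove) = 0 := by
    rcases eq_or_ne i 0 with rfl | hi
    · exact Ω.apply_eq_zero_of_mem_kerForm hu₁ (i := 0) (by simp)
    · exact Ω.apply_eq_zero_of_mem_kerForm hu₀ (i := 0) (by simp [Fin.succAbove_ne_zero_zero hi])
  have hpair (i j : Fin (m + 2)) (hij : i < j) (hne : i ≠ 0 ∨ j ≠ 1) :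
      Ω (insertTwo u (br (u i) (u j)) i j) = 0 := by
    have hj : 1 < j.1 := by
      have : i.1 < j.1 := hij
      rcases hne with hi | hj
      · have := Fin.pos_of_ne_zero hi; omega
      · have := Fin.val_ne_of_ne hj; simp only [Fin.val_one] at this; omega
    have hm : 1 < m + 1 := by have := j.2; omega
    rcases eq_or_ne i 0 with rfl | hi
    · exact Ω.apply_eq_zero_of_mem_kerForm hu₁ (i := ⟨1, hm⟩) (insertTwo_zero_of_one_lt _ _ rfl hj)
    · exact Ω.apply_eq_zero_of_mem_kerForm hu₀ (i := ⟨1, hm⟩) (insertTwo_of_ne_zero _ _ rfl hi)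
  rw [exd, Finset.sum_eq_zero (fun i _ => by rw [hdrop, hev, mul_zero]), zero_add,
    Fintype.sum_eq_single 0, Fintype.sum_eq_single 1, if_pos Fin.zero_lt_one, insertTwo_zero_one]
  · simp
  · intro j hj
    split_ifs with h0j
    · rw [hpair 0 j h0j (Or.inr hj), mul_zero]
    · rfl
  · intro i hi
    refine Finset.sum_eq_zero fun j _ => ?_
    split_ifs with hij
    · rw [hpair i j hij (Or.inl hi), mul_zero]
    · rfl

theorem closed_SLnC_structure_integrable_general
    (ev : L → R → R) (br : L → L → L)
    -- Cartan-calculus axioms for vector fields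
    (hev_add : ∀ v : L, ∀ f g : R, ev v (f + g) = ev v f + ev v g)
    {m : ℕ}
    -- `Ω` is a complex `n`-form (`n = m + 1`): alternating and `R`-multilinear
    (Ω : RawForm R L (m + 1))
    (hΩ_lin : ∀ (u : Fin (m + 1) → L) (i : Fin (m + 1)) (c : R) (x y : L),
      Ω (Function.update u i (c • x + y)) =
        c * Ω (Function.update u i x) + Ω (Function.update u i y))
    (hΩ_alt : ∀ (u : Fin (m + 1) → L) (i j : Fin (m + 1)),
      i ≠ j → u i = u j → Ω u = 0)
    -- `Ω` is closed
    (hΩ_closed : ∀ u : Fin (m + 2) → L, exd ev br Ω u = 0) :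
    ∀ v ∈ kerForm Ω, ∀ w ∈ kerForm Ω, br v w ∈ kerForm Ω := by
  intro v hv w hw w'
  have hev (x : L) : ev x 0 = 0 := by simpa using hev_add x 0 0
  have hexd : exd ev br Ω (Fin.cons v (Fin.cons w w')) = -Ω (Fin.cons (br v w) w') :=
    exd_apply_of_mem_kerForm ev br hev (Ω.toAlternatingMap hΩ_lin hΩ_alt) hv hw
  rwa [hΩ_closed, zero_eq_neg] at hexd

/-- **Lemma 4-1-2** (Goto).  Let `X` be a real `2n`-dimensional manifold and
`Ω` a smooth complex `n`-form on `X` which at each point is an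
`SL_n(ℂ)`-structure, i.e. `dim_ℂ Ker Ω = n` and `Ker Ω ∩ conj(Ker Ω) = {0}`,
and let `I_Ω` be the almost complex structure with `I_Ω = -√-1` on `Ker Ω`
and `I_Ω = √-1` on `conj(Ker Ω)`.  If `dΩ = 0`, then `I_Ω` is integrable:
by Newlander–Nirenberg, the `(0,1)`-distribution `T^{0,1} = Ker Ω` is
involutive, i.e. closed under the Lie bracket of complexified vector fields. -/
theorem closed_SLnC_structure_integrable
    (ev : L → R → R) (br : L → L → L) (conj : L → L)
    -- Cartan-calculus axioms for vector fields
    (hev_add : ∀ v : L, ∀ f g : R, ev v (f + g) = ev v f + ev v g)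
    (hev_leibniz : ∀ v : L, ∀ f g : R, ev v (f * g) = f * ev v g + ev v f * g)
    (hbr_antisymm : ∀ u v : L, br u v = -br v u)
    (hbr_leibniz : ∀ u v : L, ∀ f : R, br u (f • v) = f • br u v + ev u f • v)
    (hbr_jacobi : ∀ u v w : L,
      br u (br v w) + br v (br w u) + br w (br u v) = 0)
    (hconj_invol : ∀ v, conj (conj v) = v)
    {m : ℕ}
    -- `Ω` is a complex `n`-form (`n = m + 1`): alternating and `R`-multilinear
    (Ω : RawForm R L (m + 1))
    (hΩ_lin : ∀ (u : Fin (m + 1) → L) (i : Fin (m + 1)) (c : R) (x y : L),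
      Ω (Function.update u i (c • x + y)) =
        c * Ω (Function.update u i x) + Ω (Function.update u i y))
    (hΩ_alt : ∀ (u : Fin (m + 1) → L) (i j : Fin (m + 1)),
      i ≠ j → u i = u j → Ω u = 0)
    -- the pointwise `SL_n(ℂ)` conditions: `L = Ker Ω ⊕ conj(Ker Ω)`
    (hker_span : ∀ v : L, ∃ x ∈ kerForm Ω, ∃ y ∈ kerForm Ω, v = x + conj y)
    (hker_indep : ∀ v : L, v ∈ kerForm Ω → conj v ∈ kerForm Ω → v = 0)
    -- `Ω` is closed
    (hΩ_closed : ∀ u : Fin (m + 2) → L, exd ev br Ω u = 0) :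
    ∀ v ∈ kerForm Ω, ∀ w ∈ kerForm Ω, br v w ∈ kerForm Ω :=
  closed_SLnC_structure_integrable_general ev br hev_add Ω hΩ_lin hΩ_alt hΩ_closed
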